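/- arXiv:2401.08606 — 3 statements merged into one kernel-verified Lean document; each statement's English description precedes it below -/
import Mathlib

section
/- The biased sample variance operator f(d) = (1/N) ∑_{n=1}^N (d_n - d̄)^2, where d̄ is the sample mean of d, satisfies |f(d) - f(e)| ≤ N^{-1/p} (|d̄ + ē| + d*) ‖d - e‖_p, where d* = max_n |d_n + e_n| and d̄, ē are the respective sample means. -/
/-! Writing `D, E` for the means, `(d - D)² - (e - E)² = (d - e)(d + e - (D + E)) - (D - E)((d - D) + (e - E))`,
and deviations from the mean sum to zero, so `N (f d - f e) = ∑ (dₙ - eₙ)(dₙ + eₙ - (D + E))`.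
Each second factor is at most `|D + E| + d*` in absolute value, and the power mean inequality
bounds the arithmetic mean of `|dₙ - eₙ|` by `N^{-1/p} ‖d - e‖_p`. -/

open Finset

section
variable {ι : Type*} [Fintype ι]

theorem sum_sub_mean_eq_zero [Nonempty ι] (d : ι → ℝ) :
    ∑ i, (d i - (∑ j, d j) / Fintype.card ι) = 0 := by
  have hcard : (Fintype.card ι : ℝ) ≠ 0 := by exact_mod_cast Fintype.card_ne_zero
  rw [sum_sub_distrib, sum_const, card_univ, nsmul_eq_mul, mul_div_cancel₀ _ hcard, sub_self]

theorem sum_sq_sub_mean_sub_sum_sq_sub_mean [Nonempty ι] (d e : ι → ℝ) :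
    ∑ i, (d i - (∑ j, d j) / Fintype.card ι) ^ 2 - ∑ i, (e i - (∑ j, e j) / Fintype.card ι) ^ 2 =
      ∑ i, (d i - e i) *
        (d i + e i - ((∑ j, d j) / Fintype.card ι + (∑ j, e j) / Fintype.card ι)) := by
  set D := (∑ j, d j) / Fintype.card ι
  set E := (∑ j, e j) / Fintype.card ι
  have hdev : ∑ i, ((d i - D) + (e i - E)) = 0 := by
    rw [sum_add_distrib, sum_sub_mean_eq_zero, sum_sub_mean_eq_zero, add_zero]
  calc ∑ i, (d i - D) ^ 2 - ∑ i, (e i - E) ^ 2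
      = ∑ i, ((d i - e i) * (d i + e i - (D + E)) - (D - E) * ((d i - D) + (e i - E))) := by
        rw [← sum_sub_distrib]
        exact sum_congr rfl fun i _ => by ring
    _ = ∑ i, (d i - e i) * (d i + e i - (D + E)) := by
        rw [sum_sub_distrib, ← mul_sum, hdev, mul_zero, sub_zero]

theorem abs_sum_mul_le_of_abs_le {f g : ι → ℝ} {K : ℝ} (hg : ∀ i, |g i| ≤ K) :
    |∑ i, f i * g i| ≤ K * ∑ i, |f i| :=
  calc |∑ i, f i * g i| ≤ ∑ i, |f i| * |g i| := by
        simpa only [abs_mul] using abs_sum_le_sum_abs (fun i => f i * g i) univ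
    _ ≤ ∑ i, |f i| * K := sum_le_sum fun i _ => mul_le_mul_of_nonneg_left (hg i) (abs_nonneg _)
    _ = K * ∑ i, |f i| := by rw [← sum_mul, mul_comm]

theorem sum_div_card_le_rpow_mul_sum_rpow [Nonempty ι] {f : ι → ℝ} (hf : ∀ i, 0 ≤ f i)
    {p : ℝ} (hp : 1 ≤ p) :
    (∑ i, f i) / Fintype.card ι ≤
      (Fintype.card ι : ℝ) ^ (-(1 / p)) * (∑ i, f i ^ p) ^ (1 / p) := by
  have hcard : (0 : ℝ) < Fintype.card ι := by exact_mod_cast Fintype.card_pos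
  have hmean := Real.arith_mean_le_rpow_mean univ (fun _ => 1 / (Fintype.card ι : ℝ)) f
    (fun _ _ => by positivity) (by simp [hcard.ne']) (fun i _ => hf i) hp
  rw [← mul_sum, ← mul_sum] at hmean
  calc (∑ i, f i) / Fintype.card ι = 1 / (Fintype.card ι : ℝ) * ∑ i, f i := by ring
    _ ≤ (1 / (Fintype.card ι : ℝ) * ∑ i, f i ^ p) ^ (1 / p) := hmean
    _ = (Fintype.card ι : ℝ) ^ (-(1 / p)) * (∑ i, f i ^ p) ^ (1 / p) := by
        rw [Real.mul_rpow (by positivity) (sum_nonneg fun i _ => Real.rpow_nonneg (hf i) p),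
          one_div (Fintype.card ι : ℝ), Real.inv_rpow hcard.le, ← Real.rpow_neg hcard.le]

end

/-- The biased sample variance satisfies
`|var d - var e| ≤ N^{-1/p} (|d̄ + ē| + max_n |d_n + e_n|) ‖d - e‖_p`. -/
theorem stmt3 (N : ℕ) [NeZero N] (p : ℝ) (hp : 1 ≤ p) (d e : Fin N → ℝ) :
    |(∑ i, (d i - (∑ j, d j) / N) ^ 2) / N - (∑ i, (e i - (∑ j, e j) / N) ^ 2) / N| ≤
      (N : ℝ) ^ (-(1 / p)) *
        (|(∑ j, d j) / N + (∑ j, e j) / N| +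
          Finset.univ.sup' Finset.univ_nonempty (fun i => |d i + e i|)) *
        (∑ i, |d i - e i| ^ p) ^ (1 / p) := by
  have hN : (0 : ℝ) < N := by exact_mod_cast Nat.pos_of_neZero N
  set S := (∑ j, d j) / N + (∑ j, e j) / N
  set M := Finset.univ.sup' Finset.univ_nonempty (fun i => |d i + e i|)
  have hdiff := sum_sq_sub_mean_sub_sum_sq_sub_mean d e
  simp only [Fintype.card_fin] at hdiff
  have hfactor : ∀ i, |d i + e i - S| ≤ |S| + M := fun i =>
    (abs_sub _ _).trans <| by
      rw [add_comm]
      gcongr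
      exact le_sup' (fun i => |d i + e i|) (mem_univ i)
  have hmean := sum_div_card_le_rpow_mul_sum_rpow (fun i => abs_nonneg (d i - e i)) hp
  rw [Fintype.card_fin] at hmean
  have hSM : 0 ≤ |S| + M := (abs_nonneg _).trans (hfactor (Classical.arbitrary _))
  calc |(∑ i, (d i - (∑ j, d j) / N) ^ 2) / N - (∑ i, (e i - (∑ j, e j) / N) ^ 2) / N|
      = |∑ i, (d i - e i) * (d i + e i - S)| / N := by
        rw [div_sub_div_same, hdiff, abs_div, abs_of_pos hN]
    _ ≤ (|S| + M) * ((∑ i, |d i - e i|) / N) := by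
        rw [mul_div_assoc']
        gcongr
        exact abs_sum_mul_le_of_abs_le hfactor
    _ ≤ (|S| + M) * ((N : ℝ) ^ (-(1 / p)) * (∑ i, |d i - e i| ^ p) ^ (1 / p)) := by gcongr
    _ = (N : ℝ) ^ (-(1 / p)) * (|S| + M) * (∑ i, |d i - e i| ^ p) ^ (1 / p) := by ring
end

section
/- Let d, e ∈ ℝ^N, let S ⊆ {2, ..., N} be a set of indices containing no two consecutive integers (the 'missing' indices, with 1 ∉ S). Define the last-value imputation operator f where f(d)_n = d_{n-1} if n ∈ S and f(d)_n = d_n otherwise. Then ‖f(d) - f(e)‖_p^p ≤ 2 ‖d - e‖_p^p for any p ≥ 1. -/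
open Finset

/-- Last-value imputation on a set `S` of missing indices (not containing the
first index and with no two consecutive indices) satisfies
`‖f(d) - f(e)‖_p^p ≤ 2 ‖d - e‖_p^p`. -/
theorem stmt9 (N : ℕ) (p : ℝ) (hp : 1 ≤ p) (d e : Fin N → ℝ) (S : Finset (Fin N))
    (h0 : ∀ n ∈ S, (n : ℕ) ≠ 0)
    (hcons : ∀ n ∈ S, ∀ m ∈ S, (n : ℕ) + 1 ≠ (m : ℕ)) :
    ∑ n, |(if n ∈ S then d ⟨(n : ℕ) - 1, lt_of_le_of_lt (Nat.pred_le _) n.isLt⟩ else d n) -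
          (if n ∈ S then e ⟨(n : ℕ) - 1, lt_of_le_of_lt (Nat.pred_le _) n.isLt⟩ else e n)| ^ p ≤
      2 * ∑ n, |d n - e n| ^ p := by
  set F : Fin N → ℝ := fun m => |d m - e m| ^ p with hF
  set pr : Fin N → Fin N :=
    fun n => ⟨(n : ℕ) - 1, lt_of_le_of_lt (Nat.pred_le _) n.isLt⟩ with hpr
  have hFnn : ∀ m : Fin N, 0 ≤ F m := fun m => Real.rpow_nonneg (abs_nonneg _) p
  have hstep : (∑ n, |(if n ∈ S then d (pr n) else d n) -
      (if n ∈ S then e (pr n) else e n)| ^ p)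
      = ∑ n, (if n ∈ S then F (pr n) else F n) := by
    refine Finset.sum_congr rfl fun n _ => ?_
    split_ifs <;> rfl
  rw [hstep, ← Finset.sum_add_sum_compl S]
  have h1 : (∑ n ∈ S, if n ∈ S then F (pr n) else F n) = ∑ n ∈ S, F (pr n) :=
    Finset.sum_congr rfl fun n hn => if_pos hn
  have h2 : (∑ n ∈ Sᶜ, if n ∈ S then F (pr n) else F n) = ∑ n ∈ Sᶜ, F n :=
    Finset.sum_congr rfl fun n hn => if_neg (Finset.mem_compl.mp hn)
  rw [h1, h2]
  have hinj : Set.InjOn pr S := by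
    intro a ha b hb hab
    have h1 := h0 a ha
    have h2 := h0 b hb
    have : (a : ℕ) - 1 = (b : ℕ) - 1 := congrArg Fin.val hab
    exact Fin.ext (by omega)
  have hA : ∑ n ∈ S, F (pr n) ≤ ∑ n, F n := by
    rw [← Finset.sum_image hinj]
    exact Finset.sum_le_sum_of_subset_of_nonneg (Finset.subset_univ _)
      (fun m _ _ => hFnn m)
  have hB : ∑ n ∈ Sᶜ, F n ≤ ∑ n, F n :=
    Finset.sum_le_sum_of_subset_of_nonneg (Finset.subset_univ _)
      (fun m _ _ => hFnn m)
  calc ∑ n ∈ S, F (pr n) + ∑ n ∈ Sᶜ, F n ≤ ∑ n, F n + ∑ n, F n := add_le_add hA hB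
    _ = 2 * ∑ n, F n := by ring
end

section
/- Let (b̂_p)_{p∈P} be a finite family of random variables indexed by a product path space P = ∏_{j=1}^J {1,...,r_j} with r_j ≥ 2, each with unit variance, and suppose the correlation between b̂_p and b̂_q equals ρ^{d(p,q)} where d is the Hamming distance and 0 ≤ ρ < 1. Then the average of all pairwise correlations, |P|^{-2} ∑_{p,q} ρ^{d(p,q)}, equals ∏_{j=1}^J (1 + ρ(r_j - 1))/r_j, which converges to 0 as J → ∞. -/
open Finset MeasureTheory

/-!
`ρ ^ d(p, q)` is the product over coordinates of `1` or `ρ` according as `p j = q j`,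
so summing over `q` factorises coordinatewise into `∏ j, (1 + ρ (r_j - 1))`, independently of `p`.
Each factor of the average, `ρ + (1 - ρ) / r_j`, lies in `[0, (1 + ρ) / 2]`, so the average
decays geometrically.
-/

section HammingSum

variable {ι : Type*} [Fintype ι] {β : ι → Type*} [∀ i, DecidableEq (β i)]

theorem pow_hammingDist_eq_prod {R : Type*} [CommMonoid R] (ρ : R) (p q : ∀ i, β i) :
    ρ ^ hammingDist p q = ∏ i, if p i = q i then 1 else ρ := by
  rw [prod_ite, prod_const_one, prod_const, one_mul]
  rfl

theorem sum_ite_eq_one_add_mul_card_sub_one {α R : Type*} [Fintype α] [DecidableEq α] [CommRing R]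
    (ρ : R) (a : α) :
    ∑ b : α, (if a = b then 1 else ρ) = 1 + ρ * (Fintype.card α - 1) := by
  have h : ∀ b : α, (if a = b then 1 else ρ) = ρ + if a = b then 1 - ρ else 0 := by
    intro b; split <;> abel
  simp only [h, sum_add_distrib, sum_const, sum_ite_eq, mem_univ, if_true, card_univ,
    nsmul_eq_mul]
  ring

variable [DecidableEq ι] [∀ i, Fintype (β i)]

theorem sum_pow_hammingDist {R : Type*} [CommRing R] (ρ : R) (p : ∀ i, β i) :
    ∑ q : ∀ i, β i, ρ ^ hammingDist p q = ∏ i, (1 + ρ * (Fintype.card (β i) - 1)) := by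
  simp only [pow_hammingDist_eq_prod, ← Fintype.prod_sum (fun i y => if p i = y then 1 else ρ),
    sum_ite_eq_one_add_mul_card_sub_one]

theorem sum_sum_pow_hammingDist {R : Type*} [CommRing R] (ρ : R) :
    ∑ p : ∀ i, β i, ∑ q : ∀ i, β i, ρ ^ hammingDist p q =
      (∏ i, (Fintype.card (β i) : R)) * ∏ i, (1 + ρ * (Fintype.card (β i) - 1)) := by
  simp only [sum_pow_hammingDist, sum_const, card_univ, Fintype.card_pi, nsmul_eq_mul,
    Nat.cast_prod]

theorem inv_sq_mul_sum_sum_pow_hammingDist {K : Type*} [Field K] (ρ : K) :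
    ((∏ i, (Fintype.card (β i) : K))⁻¹) ^ 2 *
        ∑ p : ∀ i, β i, ∑ q : ∀ i, β i, ρ ^ hammingDist p q =
      ∏ i, (1 + ρ * (Fintype.card (β i) - 1)) / Fintype.card (β i) := by
  rw [sum_sum_pow_hammingDist, prod_div_distrib]
  rcases eq_or_ne (∏ i, (Fintype.card (β i) : K)) 0 with h | h
  · simp [h]
  · field_simp

end HammingSum

section Decay

variable {ρ : ℝ}

theorem one_add_mul_sub_one_div_nonneg (hρ : 0 ≤ ρ) {x : ℝ} (hx : 1 ≤ x) :
    0 ≤ (1 + ρ * (x - 1)) / x := by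
  have : 0 ≤ ρ * (x - 1) := mul_nonneg hρ (by linarith)
  positivity

theorem one_add_mul_sub_one_div_le (hρ : ρ ≤ 1) {x : ℝ} (hx : 2 ≤ x) :
    (1 + ρ * (x - 1)) / x ≤ (1 + ρ) / 2 := by
  rw [div_le_div_iff₀ (by linarith) two_pos]
  nlinarith

theorem tendsto_prod_one_add_mul_sub_one_div (hρ0 : 0 ≤ ρ) (hρ1 : ρ < 1) (x : ℕ → ℝ)
    (hx : ∀ j, 2 ≤ x j) :
    Filter.Tendsto (fun J : ℕ => ∏ j : Fin J, (1 + ρ * (x j - 1)) / x j)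
      Filter.atTop (nhds 0) := by
  have hgeom : Filter.Tendsto (fun J : ℕ => ((1 + ρ) / 2) ^ J) Filter.atTop (nhds 0) :=
    tendsto_pow_atTop_nhds_zero_of_lt_one (by linarith) (by linarith)
  refine squeeze_zero (fun J => prod_nonneg fun j _ =>
    one_add_mul_sub_one_div_nonneg hρ0 (by linarith [hx j])) (fun J => ?_) hgeom
  calc ∏ j : Fin J, (1 + ρ * (x j - 1)) / x j ≤ ∏ _j : Fin J, (1 + ρ) / 2 :=
        prod_le_prod (fun j _ => one_add_mul_sub_one_div_nonneg hρ0 (by linarith [hx j]))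
          fun j _ => one_add_mul_sub_one_div_le hρ1.le (hx j)
    _ = ((1 + ρ) / 2) ^ J := by rw [prod_const, card_univ, Fintype.card_fin]

end Decay

theorem stmt15_general {Ω : Type*} [MeasurableSpace Ω] (μ : Measure Ω)
    (ρ : ℝ) (hρ0 : 0 ≤ ρ) (hρ1 : ρ < 1) (r : ℕ → ℕ) (hr : ∀ j, 2 ≤ r j)
    (b : (J : ℕ) → ((j : Fin J) → Fin (r j)) → Ω → ℝ)
    (hcov : ∀ J (p q : (j : Fin J) → Fin (r j)),
      ∫ x, b J p x * b J q x ∂μ - (∫ x, b J p x ∂μ) * (∫ x, b J q x ∂μ) =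
        ρ ^ (Finset.univ.filter (fun j => p j ≠ q j)).card) :
    (∀ J : ℕ, ((∏ j : Fin J, (r j : ℝ))⁻¹) ^ 2 *
        ∑ p : (j : Fin J) → Fin (r j), ∑ q : (j : Fin J) → Fin (r j),
          (∫ x, b J p x * b J q x ∂μ - (∫ x, b J p x ∂μ) * (∫ x, b J q x ∂μ)) =
        ∏ j : Fin J, (1 + ρ * ((r j : ℝ) - 1)) / (r j)) ∧
    Filter.Tendsto (fun J : ℕ => ((∏ j : Fin J, (r j : ℝ))⁻¹) ^ 2 *
        ∑ p : (j : Fin J) → Fin (r j), ∑ q : (j : Fin J) → Fin (r j),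
          (∫ x, b J p x * b J q x ∂μ - (∫ x, b J p x ∂μ) * (∫ x, b J q x ∂μ)))
      Filter.atTop (nhds 0) := by
  have average_eq : ∀ J : ℕ, ((∏ j : Fin J, (r j : ℝ))⁻¹) ^ 2 *
        ∑ p : (j : Fin J) → Fin (r j), ∑ q : (j : Fin J) → Fin (r j),
          (∫ x, b J p x * b J q x ∂μ - (∫ x, b J p x ∂μ) * (∫ x, b J q x ∂μ)) =
        ∏ j : Fin J, (1 + ρ * ((r j : ℝ) - 1)) / (r j) := by
    intro J
    have h := inv_sq_mul_sum_sum_pow_hammingDist (β := fun j : Fin J => Fin (r j)) ρ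
    simp only [Fintype.card_fin] at h
    simp only [hcov]
    -- `hammingDist p q` is by definition the cardinality appearing in `hcov`
    exact h
  refine ⟨average_eq, ?_⟩
  simp only [average_eq]
  exact tendsto_prod_one_add_mul_sub_one_div hρ0 hρ1 (fun j => r j)
    fun j => by exact_mod_cast hr j

/-- For unit-variance random variables `b̂_p` indexed by the path space
`∏_{j<J} {1,…,r_j}` with correlations `ρ^{d(p,q)}` (`d` the Hamming distance),
the average of all pairwise correlations equals `∏_j (1 + ρ(r_j-1))/r_j`,
which converges to 0 as `J → ∞`. -/
theorem stmt15 {Ω : Type*} [MeasurableSpace Ω] (μ : Measure Ω) [IsProbabilityMeasure μ]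
    (ρ : ℝ) (hρ0 : 0 ≤ ρ) (hρ1 : ρ < 1) (r : ℕ → ℕ) (hr : ∀ j, 2 ≤ r j)
    (b : (J : ℕ) → ((j : Fin J) → Fin (r j)) → Ω → ℝ)
    (hvar : ∀ J p, ∫ x, (b J p x) ^ 2 ∂μ - (∫ x, b J p x ∂μ) ^ 2 = 1)
    (hcov : ∀ J (p q : (j : Fin J) → Fin (r j)),
      ∫ x, b J p x * b J q x ∂μ - (∫ x, b J p x ∂μ) * (∫ x, b J q x ∂μ) =
        ρ ^ (Finset.univ.filter (fun j => p j ≠ q j)).card) :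
    (∀ J : ℕ, ((∏ j : Fin J, (r j : ℝ))⁻¹) ^ 2 *
        ∑ p : (j : Fin J) → Fin (r j), ∑ q : (j : Fin J) → Fin (r j),
          (∫ x, b J p x * b J q x ∂μ - (∫ x, b J p x ∂μ) * (∫ x, b J q x ∂μ)) =
        ∏ j : Fin J, (1 + ρ * ((r j : ℝ) - 1)) / (r j)) ∧
    Filter.Tendsto (fun J : ℕ => ((∏ j : Fin J, (r j : ℝ))⁻¹) ^ 2 *
        ∑ p : (j : Fin J) → Fin (r j), ∑ q : (j : Fin J) → Fin (r j),
          (∫ x, b J p x * b J q x ∂μ - (∫ x, b J p x ∂μ) * (∫ x, b J q x ∂μ)))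
      Filter.atTop (nhds 0) :=
  stmt15_general μ ρ hρ0 hρ1 r hr b hcov
end
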